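/- There exists a universal constant C > 0 with the following property. Let T ≥ 1 and B be real with 1 ≤ B ≤ T, let η ∈ (0,1], let n ≤ T be a positive integer, and let c₁, …, cₙ ∈ [0,1]. Define μ₁ = 1 and μₜ₊₁ = min(1, μₜ·exp(η·(cₜ − B/T))) for t = 1, …, n−1. If either Σₜ₌₁ⁿ cₜ > B − 1 or n = T, then Σₜ₌₁ⁿ μₜ·(cₜ − B/T) ≥ B·(1 − n/T) − C·(1/η + η·n) − 1. -/

import Mathlib

private lemma exp_quad_bound {x : ℝ} (hx : |x| ≤ 1) : Real.exp x ≤ 1 + x + x ^ 2 := by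
  have h := Real.exp_bound hx (n := 2) (by norm_num)
  have hsum : ∑ m ∈ Finset.range 2, x ^ m / (m.factorial : ℝ) = 1 + x := by
    simp [Finset.sum_range_succ]
  rw [hsum] at h
  have h3 := (abs_le.mp h).2
  norm_num [Nat.factorial] at h3
  nlinarith [sq_abs x, sq_nonneg x]

/-- Budget dual-drift and stopping-time cancellation: there is a universal constant `C`
such that, for payments `cₜ ∈ [0,1]` and the exponentiated-gradient budget dual
`μₜ₊₁ = min(1, μₜ e^{η (cₜ - B/T)})` with `μ₁ = 1`, if either the spend exceeds `B - 1`
after `n` rounds or `n = T`, then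
`Σₜ μₜ (cₜ - B/T) ≥ B (1 - n/T) - C (1/η + η n) - 1`. -/
theorem budget_dual_drift :
    ∃ C : ℝ, 0 < C ∧
      ∀ (T B : ℝ), 1 ≤ T → 1 ≤ B → B ≤ T →
      ∀ (η : ℝ), η ∈ Set.Ioc (0:ℝ) 1 →
      ∀ (n : ℕ), 0 < n → (n : ℝ) ≤ T →
      ∀ (c : ℕ → ℝ), (∀ t < n, c t ∈ Set.Icc (0:ℝ) 1) →
      ∀ (μ : ℕ → ℝ), μ 0 = 1 →
        (∀ t < n, μ (t + 1) = min 1 (μ t * Real.exp (η * (c t - B / T)))) →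
        ((B - 1 < ∑ t ∈ Finset.range n, c t) ∨ (n : ℝ) = T) →
        B * (1 - n / T) - C * (1 / η + η * n) - 1 ≤
          ∑ t ∈ Finset.range n, μ t * (c t - B / T) := by
  refine ⟨1, one_pos, ?_⟩
  intro T B hT hB hBT η hη n hn hnT c hc μ hμ0 hμrec hyp
  obtain ⟨hη0, hη1⟩ := hη
  have hT0 : (0:ℝ) < T := lt_of_lt_of_le one_pos hT
  set r : ℝ := B / T with hr
  have hr0 : 0 < r := div_pos (lt_of_lt_of_le one_pos hB) hT0
  have hr1 : r ≤ 1 := div_le_one_of_le₀ hBT hT0.le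
  -- bounds on μ
  have hμb : ∀ t, t ≤ n → 0 < μ t ∧ μ t ≤ 1 := by
    intro t
    induction t with
    | zero => intro _; simp [hμ0]
    | succ t ih =>
      intro h
      have ht : t < n := Nat.lt_of_succ_le h
      obtain ⟨h1, h2⟩ := ih ht.le
      rw [hμrec t ht]
      exact ⟨lt_min one_pos (mul_pos h1 (Real.exp_pos _)), min_le_left _ _⟩
  -- bound on gradients
  have hg : ∀ t, t < n → (c t - r) ^ 2 ≤ 1 ∧ |η * (c t - r)| ≤ 1 := by
    intro t ht
    obtain ⟨h0, h1⟩ := hc t ht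
    constructor
    · nlinarith
    · rw [abs_le]; constructor <;> nlinarith
  -- per-step inequality A:  μ(t+1) - μ t - η^2 ≤ η * (μ t * (c t - r))
  have stepA : ∀ t ∈ Finset.range n,
      μ (t+1) - μ t - η ^ 2 ≤ η * (μ t * (c t - r)) := by
    intro t ht
    have ht' := Finset.mem_range.mp ht
    obtain ⟨hm0, hm1⟩ := hμb t ht'.le
    obtain ⟨hg2, hgabs⟩ := hg t ht'
    have hexp := exp_quad_bound hgabs
    have hle : μ (t+1) ≤ μ t * Real.exp (η * (c t - r)) := by
      rw [hμrec t ht']; exact min_le_right _ _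
    nlinarith [mul_le_mul_of_nonneg_left hexp hm0.le, sq_nonneg (c t - r),
      mul_le_one₀ hm1 (sq_nonneg (c t - r)) hg2]
  -- potential Φ
  set Φ : ℕ → ℝ := fun t => -Real.log (μ t) + μ t - 1 with hΦ
  have hΦ0 : Φ 0 = 0 := by simp [hΦ, hμ0]
  have hΦnonneg : ∀ t, t ≤ n → 0 ≤ Φ t := by
    intro t ht
    have := Real.log_le_sub_one_of_pos (hμb t ht).1
    simp only [hΦ]; linarith
  -- per-step inequality B:  η * ((1 - μ t) * (c t - r)) ≤ Φ t - Φ (t+1) + η^2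
  have stepB : ∀ t ∈ Finset.range n,
      η * ((1 - μ t) * (c t - r)) ≤ (Φ t - Φ (t+1)) + η ^ 2 := by
    intro t ht
    have ht' := Finset.mem_range.mp ht
    obtain ⟨hm0, hm1⟩ := hμb t ht'.le
    obtain ⟨hg2, hgabs⟩ := hg t ht'
    have hexp := exp_quad_bound hgabs
    set x := η * (c t - r) with hx
    have hkey : Φ (t+1) ≤ -Real.log (μ t) - x + μ t * Real.exp x - 1 := by
      have hlogm : Real.log (μ t * Real.exp x) = Real.log (μ t) + x := by
        rw [Real.log_mul hm0.ne' (Real.exp_ne_zero _), Real.log_exp]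
      rcases le_or_gt (μ t * Real.exp x) 1 with hcase | hcase
      · have : μ (t+1) = μ t * Real.exp x := by
          rw [hμrec t ht', min_eq_right hcase]
        simp only [hΦ, this, hlogm]; ring_nf; rfl
      · have h1 : μ (t+1) = 1 := by rw [hμrec t ht', min_eq_left hcase.le]
        have hpos : 0 < μ t * Real.exp x := mul_pos hm0 (Real.exp_pos _)
        have := Real.log_le_sub_one_of_pos hpos
        simp only [hΦ, h1]
        rw [hlogm] at this
        simp only [Real.log_one]
        linarith
    have hΦt : Φ t = -Real.log (μ t) + μ t - 1 := rfl
    have hmexp : μ t * Real.exp x ≤ μ t * (1 + x + x ^ 2) :=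
      mul_le_mul_of_nonneg_left hexp hm0.le
    have hmx2 : μ t * x ^ 2 ≤ η ^ 2 := by
      have : x ^ 2 = η ^ 2 * (c t - r) ^ 2 := by rw [hx]; ring
      nlinarith [sq_nonneg η, sq_nonneg (c t - r)]
    nlinarith
  -- sums
  have sumA : μ n - 1 - n * η ^ 2 ≤ η * ∑ t ∈ Finset.range n, μ t * (c t - r) := by
    have h1 : ∑ t ∈ Finset.range n, (μ (t+1) - μ t - η ^ 2)
        ≤ ∑ t ∈ Finset.range n, η * (μ t * (c t - r)) := Finset.sum_le_sum stepA
    have h2 : ∑ t ∈ Finset.range n, (μ (t+1) - μ t - η ^ 2)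
        = (μ n - μ 0) - n * η ^ 2 := by
      rw [Finset.sum_sub_distrib, Finset.sum_range_sub, Finset.sum_const,
        Finset.card_range, nsmul_eq_mul]
    rw [h2, hμ0] at h1
    rw [Finset.mul_sum]
    exact h1
  have sumB : η * ∑ t ∈ Finset.range n, ((1 - μ t) * (c t - r)) ≤ n * η ^ 2 := by
    have h1 : ∑ t ∈ Finset.range n, (η * ((1 - μ t) * (c t - r)))
        ≤ ∑ t ∈ Finset.range n, ((Φ t - Φ (t+1)) + η ^ 2) := Finset.sum_le_sum stepB
    have h2 : ∑ t ∈ Finset.range n, ((Φ t - Φ (t+1)) + η ^ 2)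
        = (Φ 0 - Φ n) + n * η ^ 2 := by
      rw [Finset.sum_add_distrib]
      have : ∑ t ∈ Finset.range n, (Φ t - Φ (t+1))
          = -∑ t ∈ Finset.range n, (Φ (t+1) - Φ t) := by
        rw [← Finset.sum_neg_distrib]; congr 1; ext t; ring
      rw [this, Finset.sum_range_sub, Finset.sum_const, Finset.card_range, nsmul_eq_mul]
      ring
    have := hΦnonneg n le_rfl
    calc η * ∑ t ∈ Finset.range n, ((1 - μ t) * (c t - r))
        = ∑ t ∈ Finset.range n, (η * ((1 - μ t) * (c t - r))) := Finset.mul_sum _ _ _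
      _ ≤ (Φ 0 - Φ n) + n * η ^ 2 := by rw [← h2]; exact h1
      _ ≤ n * η ^ 2 := by rw [hΦ0]; linarith
  have hsplit : ∑ t ∈ Finset.range n, μ t * (c t - r)
      = (∑ t ∈ Finset.range n, c t - n * r)
        - ∑ t ∈ Finset.range n, ((1 - μ t) * (c t - r)) := by
    have e1 : ∑ t ∈ Finset.range n, μ t * (c t - r)
        = ∑ t ∈ Finset.range n, ((c t - r) - (1 - μ t) * (c t - r)) := by
      apply Finset.sum_congr rfl; intro t _; ring
    rw [e1, Finset.sum_sub_distrib, Finset.sum_sub_distrib, Finset.sum_const,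
      Finset.card_range, nsmul_eq_mul]
  have hBnr : B * (1 - (n : ℝ) / T) = B - (n : ℝ) * r := by
    rw [hr]; ring
  have hn0 : (0:ℝ) ≤ (n : ℝ) := Nat.cast_nonneg n
  have hinv : 0 < 1 / η := by positivity
  rcases hyp with hspend | hstop
  · -- case 1: spend exceeds B - 1
    have hB1 : ∑ t ∈ Finset.range n, ((1 - μ t) * (c t - r)) ≤ (n : ℝ) * η := by
      have heq : (n : ℝ) * η ^ 2 = η * ((n : ℝ) * η) := by ring
      have h2 : η * ∑ t ∈ Finset.range n, ((1 - μ t) * (c t - r))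
          ≤ η * ((n : ℝ) * η) := by rw [← heq]; exact sumB
      exact le_of_mul_le_mul_left h2 hη0
    rw [hsplit, hBnr]
    linarith
  · -- case 2: n = T
    have hnT1 : (n : ℝ) / T = 1 := by rw [hstop]; field_simp
    rw [hnT1]
    have hμn : 0 ≤ μ n := (hμb n le_rfl).1.le
    have hS : -(1 / η) - (n : ℝ) * η ≤ ∑ t ∈ Finset.range n, μ t * (c t - r) := by
      have h1 : η * (-(1 / η) - (n : ℝ) * η)
          ≤ η * ∑ t ∈ Finset.range n, μ t * (c t - r) := by
        have heq : η * (-(1 / η) - (n : ℝ) * η) = -1 - (n : ℝ) * η ^ 2 := by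
          field_simp
        rw [heq]; linarith [sumA, hμn]
      exact le_of_mul_le_mul_left h1 hη0
    have hz : B * (1 - (1:ℝ)) = 0 := by ring
    linarith
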